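/- If max{k0, k1} > 0, then μ_c > 0. -/

import Mathlib

open MeasureTheory Set

noncomputable section

/-- A function is admissible if it is twice continuously differentiable on `[0,1]`
and vanishes at the endpoints (the C² representatives of `H₀¹(0,1) ∩ H²(0,1)`). -/
def Admissible (ψ : ℝ → ℝ) : Prop :=
  ContDiffOn ℝ 2 ψ (Set.Icc (0:ℝ) 1) ∧ ψ 0 = 0 ∧ ψ 1 = 0

/-- The boundary energy `Z(ψ) = k1·ψ′(1)² + k0·ψ′(0)²`. -/
def Z (k0 k1 : ℝ) (ψ : ℝ → ℝ) : ℝ :=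
  k1 * (deriv ψ 1) ^ 2 + k0 * (deriv ψ 0) ^ 2

/-- The Dirichlet-type energy `D(ψ) = ∫₀¹ ψ″(y)² dy`. -/
def D (ψ : ℝ → ℝ) : ℝ :=
  ∫ y in (0:ℝ)..1, (deriv (deriv ψ) y) ^ 2

/-- The set of Rayleigh quotients `Z(ψ)/D(ψ)` over admissible `ψ` with `D(ψ) ≠ 0`. -/
def mucSet (k0 k1 : ℝ) : Set ℝ :=
  { r : ℝ | ∃ ψ : ℝ → ℝ, Admissible ψ ∧ D ψ ≠ 0 ∧ r = Z k0 k1 ψ / D ψ }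

/-- The critical viscosity `μ_c`. -/
def muc (k0 k1 : ℝ) : ℝ := sSup (mucSet k0 k1)

end

/-! Rolle's theorem gives a zero `c ∈ (0,1)` of `ψ′`, so `ψ′(x) = ∫_c^x ψ″` and Cauchy–Schwarz
yields `ψ′(x)² ≤ D(ψ)` on `[0,1]`. Hence every quotient is at most `|k0| + |k1|`; this boundedness
is what makes `sSup` the true supremum rather than the junk value `0`. The reflection `y ↦ 1 - y`
swaps `k0` and `k1`, so we may assume `k1 > 0`, and then `ψ(y) = y² - y³` has `Z/D = k1/4 > 0`. -/

theorem sq_intervalIntegral_le_mul_intervalIntegral_sq {g : ℝ → ℝ} {a b : ℝ} (hab : a ≤ b)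
    (hg : IntervalIntegrable g volume a b)
    (hg2 : IntervalIntegrable (fun y => g y ^ 2) volume a b) :
    (∫ y in a..b, g y) ^ 2 ≤ (b - a) * ∫ y in a..b, g y ^ 2 := by
  have hquad : ∀ t : ℝ,
      0 ≤ (b - a) * (t * t) + (-2 * ∫ y in a..b, g y) * t + ∫ y in a..b, g y ^ 2 := by
    intro t
    have hexpand : ∫ y in a..b, (g y - t) ^ 2
        = (b - a) * (t * t) + (-2 * ∫ y in a..b, g y) * t + ∫ y in a..b, g y ^ 2 := by
      have : ∀ y, (g y - t) ^ 2 = g y ^ 2 - (2 * t) * g y + t ^ 2 := fun y => by ring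
      simp_rw [this]
      rw [intervalIntegral.integral_add (hg2.sub (hg.const_mul _)) intervalIntegrable_const,
        intervalIntegral.integral_sub hg2 (hg.const_mul _), intervalIntegral.integral_const_mul,
        intervalIntegral.integral_const, smul_eq_mul]
      ring
    exact hexpand ▸ intervalIntegral.integral_nonneg hab fun y _ => sq_nonneg (g y - t)
  have := discrim_le_zero hquad
  rw [discrim] at this
  linarith

theorem sq_sub_le_mul_integral_sq_derivWithin {f : ℝ → ℝ} {a b x c : ℝ}
    (hf : ContDiffOn ℝ 1 f (Icc a b)) (hx : x ∈ Icc a b) (hc : c ∈ Icc a b) :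
    (f x - f c) ^ 2 ≤ (b - a) * ∫ y in a..b, derivWithin f (Icc a b) y ^ 2 := by
  wlog hcx : c ≤ x generalizing x c
  · rw [← neg_sub, neg_sq]
    exact this hc hx (not_le.1 hcx).le
  rcases (hx.1.trans hx.2).eq_or_lt with rfl | hab
  · obtain rfl : x = c := by linarith [hx.1, hx.2, hc.1, hc.2]
    simp
  set g := derivWithin f (Icc a b)
  have hg : ContinuousOn g (Icc a b) := hf.continuousOn_derivWithin (uniqueDiffOn_Icc hab) le_rfl
  have hg2 : ContinuousOn (fun y => g y ^ 2) (Icc a b) := hg.pow 2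
  have hsub : Icc c x ⊆ Icc a b := Icc_subset_Icc hc.1 hx.2
  have hftc : ∫ y in c..x, g y = f x - f c := by
    refine intervalIntegral.integral_eq_sub_of_hasDerivAt_of_le hcx
      (hf.continuousOn.mono hsub) (fun t ht => ?_)
      ((hg.mono hsub).intervalIntegrable_of_Icc hcx)
    have ht' : Icc a b ∈ nhds t := Icc_mem_nhds (hc.1.trans_lt ht.1) (ht.2.trans_le hx.2)
    exact (hf.differentiableOn one_ne_zero t (mem_of_mem_nhds ht')).hasDerivWithinAt.hasDerivAt ht'
  calc (f x - f c) ^ 2 = (∫ y in c..x, g y) ^ 2 := by rw [hftc]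
    _ ≤ (x - c) * ∫ y in c..x, g y ^ 2 :=
      sq_intervalIntegral_le_mul_intervalIntegral_sq hcx
        ((hg.mono hsub).intervalIntegrable_of_Icc hcx)
        ((hg2.mono hsub).intervalIntegrable_of_Icc hcx)
    _ ≤ (b - a) * ∫ y in a..b, g y ^ 2 := by
      refine mul_le_mul (by linarith [hx.2, hc.1]) ?_
        (intervalIntegral.integral_nonneg hcx fun y _ => sq_nonneg (g y)) (by linarith)
      exact intervalIntegral.integral_mono_interval hc.1 hcx hx.2
        (.of_forall fun y => sq_nonneg (g y)) (hg2.intervalIntegrable_of_Icc hab.le)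

theorem sq_deriv_le_sq_derivWithin {f : ℝ → ℝ} {s : Set ℝ} {x : ℝ}
    (hs : UniqueDiffWithinAt ℝ s x) : deriv f x ^ 2 ≤ derivWithin f s x ^ 2 := by
  by_cases hf : DifferentiableAt ℝ f x
  · rw [hf.derivWithin hs]
  · simpa [deriv_zero_of_not_differentiableAt hf] using sq_nonneg (derivWithin f s x)

theorem D_nonneg (ψ : ℝ → ℝ) : 0 ≤ D ψ :=
  intervalIntegral.integral_nonneg zero_le_one fun _ _ => sq_nonneg _

theorem D_eq_integral_sq_derivWithin (ψ : ℝ → ℝ) :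
    D ψ = ∫ y in (0:ℝ)..1, derivWithin (derivWithin ψ (Icc 0 1)) (Icc 0 1) y ^ 2 := by
  refine intervalIntegral.integral_congr_Ioo_of_le zero_le_one fun y hy => ?_
  have hderiv : deriv ψ =ᶠ[nhds y] derivWithin ψ (Icc 0 1) := by
    filter_upwards [Ioo_mem_nhds hy.1 hy.2] with z hz
    exact (derivWithin_of_mem_nhds (Icc_mem_nhds hz.1 hz.2)).symm
  rw [hderiv.deriv_eq, derivWithin_of_mem_nhds (Icc_mem_nhds hy.1 hy.2)]

theorem Admissible.sq_deriv_le_D {ψ : ℝ → ℝ} (hψ : Admissible ψ) {x : ℝ} (hx : x ∈ Icc 0 1) :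
    deriv ψ x ^ 2 ≤ D ψ := by
  obtain ⟨hC, h0, h1⟩ := hψ
  have hI : UniqueDiffOn ℝ (Icc (0:ℝ) 1) := uniqueDiffOn_Icc zero_lt_one
  obtain ⟨c, hc, hc0⟩ := exists_deriv_eq_zero zero_lt_one hC.continuousOn (h0.trans h1.symm)
  have hfc : derivWithin ψ (Icc 0 1) c = 0 := by
    rw [derivWithin_of_mem_nhds (Icc_mem_nhds hc.1 hc.2), hc0]
  calc deriv ψ x ^ 2 ≤ derivWithin ψ (Icc 0 1) x ^ 2 := sq_deriv_le_sq_derivWithin (hI x hx)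
    _ = (derivWithin ψ (Icc 0 1) x - derivWithin ψ (Icc 0 1) c) ^ 2 := by rw [hfc, sub_zero]
    _ ≤ (1 - 0) * ∫ y in (0:ℝ)..1, derivWithin (derivWithin ψ (Icc 0 1)) (Icc 0 1) y ^ 2 :=
      sq_sub_le_mul_integral_sq_derivWithin (hC.derivWithin hI (by norm_num)) hx
        (Ioo_subset_Icc_self hc)
    _ = D ψ := by rw [sub_zero, one_mul, D_eq_integral_sq_derivWithin]

theorem Admissible.Z_le_mul_D {ψ : ℝ → ℝ} (hψ : Admissible ψ) (k0 k1 : ℝ) :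
    Z k0 k1 ψ ≤ (|k0| + |k1|) * D ψ := by
  have h0 := hψ.sq_deriv_le_D (left_mem_Icc.2 zero_le_one)
  have h1 := hψ.sq_deriv_le_D (right_mem_Icc.2 zero_le_one)
  calc Z k0 k1 ψ ≤ |k1| * D ψ + |k0| * D ψ := by
        unfold Z
        gcongr <;> exact le_abs_self _
    _ = (|k0| + |k1|) * D ψ := by ring

theorem mucSet_bddAbove (k0 k1 : ℝ) : BddAbove (mucSet k0 k1) := by
  refine ⟨|k0| + |k1|, ?_⟩
  rintro _ ⟨ψ, hψ, -, rfl⟩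
  exact div_le_of_le_mul₀ (D_nonneg ψ) (by positivity) (hψ.Z_le_mul_D k0 k1)

theorem Admissible.comp_one_sub {ψ : ℝ → ℝ} (hψ : Admissible ψ) :
    Admissible (fun y => ψ (1 - y)) := by
  obtain ⟨hC, h0, h1⟩ := hψ
  refine ⟨hC.comp (by fun_prop) fun y hy => ⟨by linarith [hy.2], by linarith [hy.1]⟩, ?_, ?_⟩
  · simpa using h1
  · simpa using h0

theorem Z_comp_one_sub (k0 k1 : ℝ) (ψ : ℝ → ℝ) :
    Z k0 k1 (fun y => ψ (1 - y)) = Z k1 k0 ψ := by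
  simp only [Z, deriv_comp_const_sub, neg_sq, sub_self, sub_zero]
  ring

theorem D_comp_one_sub (ψ : ℝ → ℝ) : D (fun y => ψ (1 - y)) = D ψ := by
  have h1 : deriv (fun y => ψ (1 - y)) = fun y => -deriv ψ (1 - y) :=
    funext fun y => deriv_comp_const_sub ψ 1 y
  have h2 : deriv (deriv fun y => ψ (1 - y)) = fun y => deriv (deriv ψ) (1 - y) := by
    funext y
    rw [h1, deriv.fun_neg, deriv_comp_const_sub, neg_neg]
  rw [D, h2, intervalIntegral.integral_comp_sub_left (fun y => deriv (deriv ψ) y ^ 2) 1]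
  norm_num [D]

theorem mucSet_comm (k0 k1 : ℝ) : mucSet k1 k0 = mucSet k0 k1 := by
  have hsub : ∀ a b : ℝ, mucSet b a ⊆ mucSet a b := by
    rintro a b _ ⟨ψ, hψ, hD, rfl⟩
    exact ⟨fun y => ψ (1 - y), hψ.comp_one_sub, D_comp_one_sub ψ ▸ hD,
      by rw [Z_comp_one_sub, D_comp_one_sub]⟩
  exact (hsub k0 k1).antisymm (hsub k1 k0)

theorem div_four_mem_mucSet (k0 k1 : ℝ) : k1 / 4 ∈ mucSet k0 k1 := by
  set ψ : ℝ → ℝ := fun y => y ^ 2 - y ^ 3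
  have hψ' : deriv ψ = fun y => 2 * y - 3 * y ^ 2 := by
    funext y
    simp [ψ]
  have hψ'' : deriv (deriv ψ) = fun y => 2 - 6 * y := by
    funext y
    rw [hψ', (((hasDerivAt_id' y).const_mul 2).fun_sub ((hasDerivAt_pow 2 y).const_mul 3)).deriv]
    ring
  have hD : D ψ = 4 := by
    rw [D, hψ'', intervalIntegral.integral_comp_sub_mul (fun y => y ^ 2) (by norm_num)]
    norm_num [integral_pow]
  have hZ : Z k0 k1 ψ = k1 := by
    norm_num [Z, hψ']
  exact ⟨ψ, ⟨by fun_prop, by norm_num [ψ], by norm_num [ψ]⟩, by norm_num [hD], by rw [hZ, hD]⟩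

theorem muc_comm (k0 k1 : ℝ) : muc k1 k0 = muc k0 k1 := by
  rw [muc, muc, mucSet_comm]

/-- if `max{k0, k1} > 0` then `μ_c > 0`. -/
theorem muc_pos_of_max_pos (k0 k1 : ℝ) (hk : 0 < max k0 k1) :
    0 < muc k0 k1 := by
  wlog hk1 : 0 < k1 generalizing k0 k1
  · rw [← muc_comm]
    exact this k1 k0 (max_comm k0 k1 ▸ hk) (lt_max_iff.1 hk |>.resolve_right hk1)
  exact lt_csSup_of_lt (mucSet_bddAbove k0 k1) (div_four_mem_mucSet k0 k1) (by positivity)
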